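/- arXiv:2210.10019 — 7 statements merged into one kernel-verified Lean document; each statement's English description precedes it below -/
import Mathlib

section
/- Let d ≥ 2, let μ = m·e_1 ∈ ℝ^d with m > 0 (e_1 the first standard basis vector), let 0 < η ≤ 1/m², and let (w_t)_{t≥1} in ℝ^d satisfy w_{t+1} = w_t + η(sign(⟨w_t, μ⟩) − ⟨w_t, μ⟩)μ for all t ≥ 1, where sign(u) = 1 if u > 0, sign(u) = −1 if u < 0, and sign(0) = 0. If w_1[1] > 0 and the orthogonal component B := √(Σ_{i=2}^d w_1[i]²) is strictly positive, then the cosine ⟨w_t, μ⟩/(‖w_t‖·‖μ‖) converges as t → ∞ to 1/√(1 + m² B²), which is strictly less than 1. In particular there exists ε̄ > 0 such that ⟨w_t, μ⟩/(‖w_t‖·‖μ‖) ≤ 1 − ε̄ for all sufficiently large t, so GD with hard labels under square loss fails to converge to an ε-optimal predictor for arbitrarily small ε. -/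
open scoped RealInnerProductSpace

/-- GD with hard labels under square loss (noiseless Gaussian model)
fails to converge to an ε-optimal predictor for arbitrarily small ε: the cosine
between w_t and μ converges to 1/√(1 + m²B²) < 1, where B is the size of the
component of w_1 orthogonal to μ. -/
theorem stmt_2 (d : ℕ) (hd : 2 ≤ d) (m η : ℝ) (hm : 0 < m) (hη0 : 0 < η)
    (hη : η ≤ 1 / m ^ 2)
    (μ : EuclideanSpace ℝ (Fin d))
    (hμ : μ = EuclideanSpace.single (⟨0, by omega⟩ : Fin d) m)
    (w : ℕ → EuclideanSpace ℝ (Fin d))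
    (hrec : ∀ t ≥ 1,
      w (t + 1) = w t + (η * (Real.sign ⟪w t, μ⟫ - ⟪w t, μ⟫)) • μ)
    (hinit : w 1 (⟨0, by omega⟩ : Fin d) > 0)
    (B : ℝ)
    (hB : B = Real.sqrt
      (∑ i ∈ Finset.univ.filter (fun i : Fin d => i ≠ ⟨0, by omega⟩), (w 1 i) ^ 2))
    (hBpos : 0 < B) :
    Filter.Tendsto (fun t => ⟪w t, μ⟫ / (‖w t‖ * ‖μ‖)) Filter.atTop
      (nhds (1 / Real.sqrt (1 + m ^ 2 * B ^ 2))) ∧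
    1 / Real.sqrt (1 + m ^ 2 * B ^ 2) < 1 ∧
    ∃ εbar > 0, ∀ᶠ t in Filter.atTop,
      ⟪w t, μ⟫ / (‖w t‖ * ‖μ‖) ≤ 1 - εbar := by
  have hd0 : (0 : ℕ) < d := by omega
  set i0 : Fin d := ⟨0, by omega⟩ with hi0
  have hηm2 : η * m ^ 2 ≤ 1 := by
    have := mul_le_mul_of_nonneg_right hη (sq_nonneg m)
    rwa [one_div, inv_mul_cancel₀ (by positivity : (m:ℝ)^2 ≠ 0)] at this
  -- inner product formula
  have hinner : ∀ v : EuclideanSpace ℝ (Fin d), ⟪v, μ⟫ = m * v i0 := by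
    intro v
    rw [hμ]
    simp [EuclideanSpace.inner_single_right, mul_comm]
  have hμnorm : ‖μ‖ = m := by
    rw [hμ, EuclideanSpace.norm_single]; exact abs_of_pos hm
  -- structure of the iterates
  have hkey : ∀ t, 1 ≤ t → 0 < w t i0 ∧ ∀ i, i ≠ i0 → w t i = w 1 i := by
    intro t ht
    induction t, ht using Nat.le_induction with
    | base => exact ⟨hinit, fun i _ => rfl⟩
    | succ t ht ih =>
      have hrt := hrec t ht
      have key : (η * (Real.sign ⟪w t, μ⟫ - ⟪w t, μ⟫)) = η * (1 - m * w t i0) := by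
        rw [hinner, Real.sign_of_pos (mul_pos hm ih.1)]
      have happ : ∀ i, w (t+1) i = w t i + (η * (1 - m * w t i0)) * μ i := by
        intro i
        rw [hrt, key]
        simp
      have hμi0 : μ i0 = m := by rw [hμ]; simp
      constructor
      · rw [happ i0, hμi0]
        have h1 := ih.1
        nlinarith [mul_pos hη0 hm]
      · intro i hi
        rw [happ i, hμ]
        rw [EuclideanSpace.single_apply, if_neg hi, mul_zero, add_zero]
        exact ih.2 i hi
  -- geometric formula for the first coordinate
  set r : ℝ := 1 - η * m ^ 2 with hr
  have hr0 : 0 ≤ r := by linarith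
  have hr1 : r < 1 := by
    have := mul_pos hη0 (pow_pos hm 2); simp only [hr]; linarith
  set c : ℝ := w 1 i0 - 1/m with hc
  have hgeo : ∀ t, 1 ≤ t → w t i0 = 1/m + r ^ (t-1) * c := by
    intro t ht
    induction t, ht using Nat.le_induction with
    | base => simp [hc]
    | succ t ht ih =>
      obtain ⟨s, rfl⟩ : ∃ s, t = s + 1 := ⟨t - 1, (Nat.succ_pred_eq_of_pos ht).symm⟩
      have hrt := hrec (s+1) ht
      have key : (η * (Real.sign ⟪w (s+1), μ⟫ - ⟪w (s+1), μ⟫))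
          = η * (1 - m * w (s+1) i0) := by
        rw [hinner, Real.sign_of_pos (mul_pos hm (hkey (s+1) ht).1)]
      have hμi0 : μ i0 = m := by rw [hμ]; simp
      have happ : w (s+1+1) i0 = w (s+1) i0 + (η * (1 - m * w (s+1) i0)) * m := by
        rw [hrt, key]; simp [hμi0]
      rw [happ, ih]
      simp only [Nat.add_sub_cancel, pow_succ, hr]
      field_simp
      ring
  -- convergence of the first coordinate
  have hta : Filter.Tendsto (fun t => w t i0) Filter.atTop (nhds (1/m)) := by
    have h1 : Filter.Tendsto (fun t : ℕ => r ^ (t-1)) Filter.atTop (nhds 0) :=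
      (tendsto_pow_atTop_nhds_zero_of_lt_one hr0 hr1).comp
        (Filter.tendsto_sub_atTop_nat 1)
    have h2 : Filter.Tendsto (fun t : ℕ => 1/m + r ^ (t-1) * c) Filter.atTop
        (nhds (1/m)) := by
      have := Filter.Tendsto.add (tendsto_const_nhds (x := 1/m) (f := Filter.atTop (α := ℕ)))
        (h1.mul_const c)
      simpa using this
    apply h2.congr'
    filter_upwards [Filter.eventually_ge_atTop 1] with t ht
    exact (hgeo t ht).symm
  -- norm formula
  have hBsq : B ^ 2 = ∑ i ∈ Finset.univ.filter (fun i : Fin d => i ≠ i0), (w 1 i) ^ 2 := by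
    rw [hB]
    exact Real.sq_sqrt (Finset.sum_nonneg fun i _ => sq_nonneg _)
  have hnorm : ∀ t, 1 ≤ t → ‖w t‖ = Real.sqrt ((w t i0)^2 + B^2) := by
    intro t ht
    rw [EuclideanSpace.norm_eq]
    congr 1
    have hsplit : ∑ i, ‖w t i‖ ^ 2
        = ‖w t i0‖ ^ 2 + ∑ i ∈ Finset.univ.filter (fun i : Fin d => i ≠ i0), ‖w t i‖ ^ 2 := by
      rw [Finset.filter_ne']
      exact (Finset.add_sum_erase Finset.univ _ (Finset.mem_univ i0)).symm
    rw [hsplit, hBsq]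
    congr 1
    · rw [Real.norm_eq_abs, sq_abs]
    · apply Finset.sum_congr rfl
      intro i hi
      rw [Finset.mem_filter] at hi
      rw [Real.norm_eq_abs, sq_abs, (hkey t ht).2 i hi.2]
  -- the limit value
  have hBne : (1:ℝ)/m ≠ 0 := by positivity
  have harg : (0:ℝ) < (1/m)^2 + B^2 := by positivity
  have hLeq : (1/m) / Real.sqrt ((1/m)^2 + B^2) = 1 / Real.sqrt (1 + m^2*B^2) := by
    have h1 : Real.sqrt (1 + m^2*B^2) = m * Real.sqrt ((1/m)^2 + B^2) := by
      rw [show (1:ℝ) + m^2*B^2 = m^2 * ((1/m)^2 + B^2) by field_simp]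
      rw [Real.sqrt_mul (sq_nonneg m), Real.sqrt_sq hm.le]
    have hs : Real.sqrt ((1/m)^2 + B^2) ≠ 0 := (Real.sqrt_pos.mpr harg).ne'
    rw [h1]
    field_simp
  -- convergence of the cosine
  have hcont : ContinuousAt (fun x : ℝ => x / Real.sqrt (x^2 + B^2)) (1/m) := by
    apply ContinuousAt.div continuousAt_id
    · exact (Real.continuous_sqrt.comp ((continuous_pow 2).add continuous_const)).continuousAt
    · exact (Real.sqrt_pos.mpr harg).ne'
  have hmain : Filter.Tendsto (fun t => ⟪w t, μ⟫ / (‖w t‖ * ‖μ‖)) Filter.atTop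
      (nhds (1 / Real.sqrt (1 + m ^ 2 * B ^ 2))) := by
    rw [← hLeq]
    apply (hcont.tendsto.comp hta).congr'
    filter_upwards [Filter.eventually_ge_atTop 1] with t ht
    rw [Function.comp_apply, hinner, hnorm t ht, hμnorm]
    rw [div_eq_div_iff (Real.sqrt_pos.mpr (by positivity)).ne'
      (by positivity : (Real.sqrt ((w t i0)^2 + B^2) * m) ≠ 0)]
    ring
  have hL1 : 1 / Real.sqrt (1 + m ^ 2 * B ^ 2) < 1 := by
    have h1 : (1:ℝ) < Real.sqrt (1 + m^2*B^2) :=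
      (Real.lt_sqrt (by norm_num)).mpr (by nlinarith [mul_pos (pow_pos hm 2) (pow_pos hBpos 2)])
    rw [div_lt_one (lt_trans one_pos h1)]
    exact h1
  refine ⟨hmain, hL1, (1 - 1 / Real.sqrt (1 + m ^ 2 * B ^ 2)) / 2, by linarith, ?_⟩
  have := hmain.eventually_lt_const (show 1 / Real.sqrt (1 + m ^ 2 * B ^ 2)
    < 1 - (1 - 1 / Real.sqrt (1 + m ^ 2 * B ^ 2)) / 2 by linarith)
  filter_upwards [this] with t ht using ht.le
end

section
/- Let m > 0 and η > 2/m², and consider one step of the recursion ā_{t+1} = (1 − η m²) ā_t + η m · sign(ā_t), where sign(u) = 1 if u > 0, sign(u) = −1 if u < 0. If |ā_t| > η m/(η m² − 2), then |ā_{t+1}| ≥ |ā_t| and sign(ā_{t+1}) = −sign(ā_t); i.e., the magnitude is non-decreasing while the sign oscillates. -/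
/-- For m > 0, η > 2/m², one step of the recursion
ā' = (1 − η m²) ā + η m · sign(ā): if |ā| > η m/(η m² − 2), then
|ā'| ≥ |ā| and sign(ā') = −sign(ā). -/
theorem stmt_4 (m η : ℝ) (hm : 0 < m) (hη : η > 2 / m ^ 2) (a : ℝ)
    (ha : |a| > η * m / (η * m ^ 2 - 2)) :
    |(1 - η * m ^ 2) * a + η * m * Real.sign a| ≥ |a| ∧
    Real.sign ((1 - η * m ^ 2) * a + η * m * Real.sign a) = -Real.sign a := by
  have hm2 : 0 < m ^ 2 := by positivity
  have hk : 2 < η * m ^ 2 := by have := (div_lt_iff₀ hm2).mp hη; linarith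
  have hη0 : 0 < η := by nlinarith
  have hηm : 0 < η * m := by positivity
  have hd : 0 < η * m ^ 2 - 2 := by linarith
  have ha' : η * m < |a| * (η * m ^ 2 - 2) := by
    have := (div_lt_iff₀ hd).mp ha; linarith
  rcases lt_trichotomy a 0 with hneg | hzero | hpos
  · rw [Real.sign_of_neg hneg, abs_of_neg hneg] at *
    have h1 : 0 < (1 - η * m ^ 2) * a + η * m * (-1) + (-a) := by nlinarith
    have h2 : 0 < (1 - η * m ^ 2) * a + η * m * (-1) := by linarith
    rw [Real.sign_of_pos h2, abs_of_pos h2]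
    constructor
    · linarith
    · norm_num
  · exfalso
    rw [hzero, abs_zero] at ha
    have : 0 < η * m / (η * m ^ 2 - 2) := by positivity
    linarith
  · rw [Real.sign_of_pos hpos, abs_of_pos hpos] at *
    have h1 : (1 - η * m ^ 2) * a + η * m * 1 + a < 0 := by nlinarith
    have h2 : (1 - η * m ^ 2) * a + η * m * 1 < 0 := by linarith
    rw [Real.sign_of_neg h2, abs_of_neg h2]
    constructor
    · linarith
    · norm_num
end

section
/- For every real u ≥ 1/2, it holds that u/cosh(u)² ≥ exp(−2u). -/
/-- For every real u ≥ 1/2, u/cosh(u)² ≥ exp(−2u). -/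
theorem stmt_9 (u : ℝ) (hu : 1 / 2 ≤ u) :
    u / (Real.cosh u) ^ 2 ≥ Real.exp (-2 * u) := by
  have hc : 0 < Real.cosh u := Real.cosh_pos u
  rw [ge_iff_le, le_div_iff₀ (by positivity)]
  have key : Real.exp (-2 * u) * Real.cosh u ^ 2 = ((1 + Real.exp (-2 * u)) / 2) ^ 2 := by
    rw [Real.cosh_eq]
    have h1 : Real.exp (-2 * u) = Real.exp (-u) * Real.exp (-u) := by
      rw [← Real.exp_add]; ring_nf
    have h2 : Real.exp (-u) * Real.exp u = 1 := by
      rw [← Real.exp_add]; simp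
    nlinarith [Real.exp_pos u, Real.exp_pos (-u)]
  rw [key]
  have hle : Real.exp (-2 * u) ≤ Real.exp (-1) := by
    apply Real.exp_le_exp.2; linarith
  have he : Real.exp (-1) < 1 / 2.7 := by
    rw [Real.exp_neg]
    rw [inv_lt_comm₀ (Real.exp_pos 1) (by norm_num)]
    have := Real.exp_one_gt_d9
    norm_num at this ⊢
    linarith
  have hp : 0 < Real.exp (-2 * u) := Real.exp_pos _
  nlinarith
end

section
/- Let L > 0 and c ≥ 0, and let (r_t)_{t≥1} be a real sequence with r_1 > 0 satisfying r_{t+1} ≥ r_t + c·exp(−L r_t) for all t ≥ 1. If for some t ≥ 2 one has r_t ≤ exp(L r_t), then exp(2 L r_t) ≥ c(t − 1); in particular, if c(t − 1) > 0, then r_t ≥ (1/(2L))·log(c(t − 1)). -/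
/-- For L > 0, c ≥ 0 and (r_t)_{t≥1} with r_1 > 0 and
r_{t+1} ≥ r_t + c·exp(−L r_t): if for some t ≥ 2 one has r_t ≤ exp(L r_t),
then exp(2L r_t) ≥ c(t − 1); if moreover c(t − 1) > 0 then
r_t ≥ (1/(2L))·log(c(t − 1)). -/
theorem stmt_14 (L c : ℝ) (hL : 0 < L) (hc : 0 ≤ c) (r : ℕ → ℝ) (hr1 : r 1 > 0)
    (hrec : ∀ t ≥ 1, r (t + 1) ≥ r t + c * Real.exp (-L * r t)) :
    ∀ t : ℕ, 2 ≤ t → r t ≤ Real.exp (L * r t) →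
      Real.exp (2 * L * r t) ≥ c * ((t : ℝ) - 1) ∧
      (c * ((t : ℝ) - 1) > 0 →
        r t ≥ (1 / (2 * L)) * Real.log (c * ((t : ℝ) - 1))) := by
  have hstep : ∀ t ≥ 1, r t ≤ r (t + 1) := by
    intro t ht
    have h := hrec t ht
    nlinarith [Real.exp_pos (-L * r t), mul_nonneg hc (Real.exp_pos (-L * r t)).le]
  have hpos : ∀ t ≥ 1, 0 < r t := by
    intro t ht
    induction t with
    | zero => omega
    | succ n ih =>
      rcases Nat.lt_or_ge n 1 with h | hn
      · have : n = 0 := by omega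
        subst this; exact hr1
      · have := hstep n hn; linarith [ih hn]
  have hf : ∀ t ≥ 1,
      Real.exp (L * r t) * r t ≥ Real.exp (L * r 1) * r 1 + c * ((t : ℝ) - 1) := by
    intro t ht
    induction t with
    | zero => omega
    | succ n ih =>
      rcases Nat.lt_or_ge n 1 with h | hn
      · have : n = 0 := by omega
        subst this; norm_num
      · have ihn := ih hn
        have h1 := hrec n hn
        have hpn := hpos n hn
        have hpn1 : 0 < r (n + 1) := hpos (n + 1) (by omega)
        have hmono : Real.exp (L * r n) ≤ Real.exp (L * r (n + 1)) := by
          have := hstep n hn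
          exact Real.exp_le_exp.2 (by nlinarith)
        have hee : Real.exp (L * r n) * Real.exp (-L * r n) = 1 := by
          rw [← Real.exp_add]; ring_nf; exact Real.exp_zero
        have h2 : Real.exp (L * r n) * r (n + 1)
            ≥ Real.exp (L * r n) * (r n + c * Real.exp (-L * r n)) :=
          mul_le_mul_of_nonneg_left h1 (Real.exp_pos _).le
        have key : Real.exp (L * r (n + 1)) * r (n + 1)
            ≥ Real.exp (L * r n) * r n + c := by
          nlinarith [mul_le_mul_of_nonneg_right hmono hpn1.le]
        have hcast : ((n + 1 : ℕ) : ℝ) - 1 = ((n : ℝ) - 1) + 1 := by push_cast; ring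
        rw [hcast]
        nlinarith
  intro t ht hle
  have hft := hf t (by omega)
  have hf1 : 0 < Real.exp (L * r 1) * r 1 := mul_pos (Real.exp_pos _) hr1
  have hpt := hpos t (by omega)
  have hexp2 : Real.exp (2 * L * r t) = Real.exp (L * r t) * Real.exp (L * r t) := by
    rw [← Real.exp_add]; ring_nf
  have h2 : Real.exp (2 * L * r t) ≥ c * ((t : ℝ) - 1) := by
    rw [hexp2]
    nlinarith [Real.exp_pos (L * r t)]
  refine ⟨h2, fun hcpos => ?_⟩
  have hlog : Real.log (c * ((t : ℝ) - 1)) ≤ 2 * L * r t := by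
    rw [Real.log_le_iff_le_exp hcpos]; exact h2
  have h3 : (1 / (2 * L)) * Real.log (c * ((t : ℝ) - 1)) ≤ (1 / (2 * L)) * (2 * L * r t) :=
    mul_le_mul_of_nonneg_left hlog (by positivity)
  have h4 : (1 / (2 * L)) * (2 * L * r t) = r t := by field_simp
  linarith
end

section
/- Let L > 0 and c ≥ 0, and let (r_t)_{t≥1} be a real sequence with r_1 > 0 satisfying r_{t+1} ≥ r_t + c·exp(−L r_t) for all t ≥ 1. If for some t ≥ 2 one has r_t ≥ exp(L r_t), then r_t² ≥ c(t − 1); in particular r_t ≥ √(c(t − 1)). -/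
/-- For L > 0, c ≥ 0 and (r_t)_{t≥1} with r_1 > 0 and
r_{t+1} ≥ r_t + c·exp(−L r_t): if for some t ≥ 2 one has r_t ≥ exp(L r_t),
then r_t² ≥ c(t − 1); in particular r_t ≥ √(c(t − 1)). -/
theorem stmt_15 (L c : ℝ) (hL : 0 < L) (hc : 0 ≤ c) (r : ℕ → ℝ) (hr1 : r 1 > 0)
    (hrec : ∀ t ≥ 1, r (t + 1) ≥ r t + c * Real.exp (-L * r t)) :
    ∀ t : ℕ, 2 ≤ t → r t ≥ Real.exp (L * r t) →
      (r t) ^ 2 ≥ c * ((t : ℝ) - 1) ∧ r t ≥ Real.sqrt (c * ((t : ℝ) - 1)) := by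
  -- monotone steps
  have hstep : ∀ t, 1 ≤ t → r t ≤ r (t + 1) := by
    intro t ht
    have := hrec t ht
    nlinarith [mul_nonneg hc (Real.exp_nonneg (-L * r t))]
  have hmono : ∀ s t, 1 ≤ s → s ≤ t → r s ≤ r t := by
    intro s t hs hst
    induction t with
    | zero => omega
    | succ n ih =>
      rcases Nat.lt_or_ge s (n + 1) with h | h
      · have hn : 1 ≤ n := by omega
        exact le_trans (ih (by omega)) (hstep n hn)
      · have : s = n + 1 := by omega
        simp [this]
  -- key unrolled bound
  have key : ∀ t, 1 ≤ t → Real.exp (L * r t) * (r t - r 1) ≥ c * ((t : ℝ) - 1) := by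
    intro t ht
    induction t with
    | zero => omega
    | succ n ih =>
      rcases Nat.lt_or_ge n 1 with h | h
      · have : n = 0 := by omega
        subst this
        simp
      · have ihn := ih h
        have hrn := hrec n h
        have hmon := hstep n h
        have hexp : Real.exp (L * r n) ≤ Real.exp (L * r (n + 1)) :=
          Real.exp_le_exp.mpr (by nlinarith)
        have hr1n : r 1 ≤ r n := hmono 1 n le_rfl h
        have hpos : (0:ℝ) < Real.exp (L * r n) := Real.exp_pos _
        have hposs : (0:ℝ) < Real.exp (L * r (n+1)) := Real.exp_pos _
        have hstepb : Real.exp (L * r n) * (r (n + 1) - r n) ≥ c := by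
          have : Real.exp (L * r n) * (c * Real.exp (-L * r n)) = c := by
            rw [mul_comm c, ← mul_assoc, ← Real.exp_add]
            simp
          nlinarith
        have hcast : ((n : ℝ) + 1 - 1) = ((n:ℝ) - 1) + 1 := by ring
        push_cast
        nlinarith [mul_le_mul_of_nonneg_right hexp (sub_nonneg.mpr hr1n),
          mul_le_mul_of_nonneg_right hexp (sub_nonneg.mpr hmon)]
  intro t ht hrt
  have h1 : 1 ≤ t := by omega
  have hk := key t h1
  have hrpos : 0 < r t := lt_of_lt_of_le hr1 (hmono 1 t le_rfl h1)
  have hexppos : 0 < Real.exp (L * r t) := Real.exp_pos _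
  have hRe : Real.exp (L * r t) * r t ≥ c * ((t : ℝ) - 1) := by
    nlinarith
  have hsq : (r t) ^ 2 ≥ c * ((t : ℝ) - 1) := by nlinarith
  refine ⟨hsq, ?_⟩
  have := Real.sqrt_le_sqrt hsq
  calc Real.sqrt (c * ((t : ℝ) - 1)) ≤ Real.sqrt ((r t) ^ 2) := this
    _ = r t := Real.sqrt_sq hrpos.le
end

section
/- Let L ≥ 1/e and c ≥ 0, and let (r_t)_{t≥1} be a real sequence with r_1 > 0 satisfying r_{t+1} ≥ r_t + c·exp(−L r_t) for all t ≥ 1. Then for every t ≥ 2 with c(t − 1) ≥ 1, it holds that r_t ≥ (1/(2L))·log(c(t − 1)). -/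
/-!
The potential `Φ(x) = x · exp (L x)` grows by at least `c` at every step of the recursion, so
`c (t - 1) ≤ r_t · exp (L r_t)`. Since `x ≤ exp (x / e)`, the hypothesis `L ≥ 1 / e` gives
`r_t ≤ exp (L r_t)`, hence `c (t - 1) ≤ exp (2 L r_t)`; taking logarithms finishes the proof.
-/

open Real

theorem le_exp_div_exp (x : ℝ) : x ≤ exp (x / exp 1) := by
  have h := add_one_le_exp (x / exp 1 - 1)
  rw [sub_add_cancel, exp_sub, le_div_iff₀ (exp_pos 1)] at h
  rwa [div_mul_cancel₀ x (exp_pos 1).ne'] at h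

theorem le_exp_mul_of_inv_exp_le {L x : ℝ} (hL : 1 / exp 1 ≤ L) (hx : 0 ≤ x) :
    x ≤ exp (L * x) :=
  (le_exp_div_exp x).trans <| exp_le_exp.mpr <| by
    rw [div_eq_inv_mul, ← one_div]
    exact mul_le_mul_of_nonneg_right hL hx

theorem mul_exp_add_le_of_le_add_mul_exp {L c a b : ℝ} (hL : 0 ≤ L) (hc : 0 ≤ c) (ha : 0 ≤ a)
    (hb : a + c * exp (-L * a) ≤ b) : a * exp (L * a) + c ≤ b * exp (L * b) := by
  have hab : a ≤ b := le_of_add_le_of_nonneg_left hb (by positivity)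
  calc a * exp (L * a) + c = (a + c * exp (-L * a)) * exp (L * a) := by
        rw [add_mul, mul_assoc, ← exp_add, neg_mul, neg_add_cancel, exp_zero, mul_one]
    _ ≤ b * exp (L * a) := mul_le_mul_of_nonneg_right hb (exp_pos _).le
    _ ≤ b * exp (L * b) :=
        mul_le_mul_of_nonneg_left (exp_le_exp.mpr (mul_le_mul_of_nonneg_left hab hL))
          (ha.trans hab)

section Recursion

variable {L c : ℝ} {r : ℕ → ℝ}

theorem pos_of_le_add_mul_exp (hc : 0 ≤ c) (hr1 : 0 < r 1)
    (hrec : ∀ t ≥ 1, r (t + 1) ≥ r t + c * exp (-L * r t)) {t : ℕ} (ht : 1 ≤ t) : 0 < r t := by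
  induction t, ht using Nat.le_induction with
  | base => exact hr1
  | succ n hn ih =>
    have : 0 ≤ c * exp (-L * r n) := by positivity
    linarith [hrec n hn]

theorem mul_sub_one_le_mul_exp (hL : 0 ≤ L) (hc : 0 ≤ c) (hr1 : 0 < r 1)
    (hrec : ∀ t ≥ 1, r (t + 1) ≥ r t + c * exp (-L * r t)) {t : ℕ} (ht : 1 ≤ t) :
    c * ((t : ℝ) - 1) ≤ r t * exp (L * r t) := by
  induction t, ht using Nat.le_induction with
  | base =>
    rw [Nat.cast_one, sub_self, mul_zero]
    exact mul_nonneg hr1.le (exp_pos _).le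
  | succ n hn ih =>
    have hstep := mul_exp_add_le_of_le_add_mul_exp hL hc
      (pos_of_le_add_mul_exp hc hr1 hrec hn).le (hrec n hn)
    push_cast
    linarith

end Recursion

/-- For L ≥ 1/e, c ≥ 0 and (r_t)_{t≥1} with r_1 > 0 and
r_{t+1} ≥ r_t + c·exp(−L r_t): for every t ≥ 2 with c(t − 1) ≥ 1 one has
r_t ≥ (1/(2L))·log(c(t − 1)). -/
theorem stmt_16 (L c : ℝ) (hL : L ≥ 1 / Real.exp 1) (hc : 0 ≤ c) (r : ℕ → ℝ)
    (hr1 : r 1 > 0)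
    (hrec : ∀ t ≥ 1, r (t + 1) ≥ r t + c * Real.exp (-L * r t)) :
    ∀ t : ℕ, 2 ≤ t → c * ((t : ℝ) - 1) ≥ 1 →
      r t ≥ (1 / (2 * L)) * Real.log (c * ((t : ℝ) - 1)) := by
  intro t ht hct
  have hLpos : 0 < L := lt_of_lt_of_le (by positivity) hL
  have ht1 : 1 ≤ t := by omega
  have hrt := pos_of_le_add_mul_exp hc hr1 hrec ht1
  have hpot := mul_sub_one_le_mul_exp hLpos.le hc hr1 hrec ht1
  have hexp : c * ((t : ℝ) - 1) ≤ exp (2 * L * r t) :=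
    calc c * ((t : ℝ) - 1) ≤ r t * exp (L * r t) := hpot
      _ ≤ exp (L * r t) * exp (L * r t) :=
          mul_le_mul_of_nonneg_right (le_exp_mul_of_inv_exp_le hL hrt.le) (exp_pos _).le
      _ = exp (2 * L * r t) := by rw [← exp_add]; ring_nf
  have hlog := (log_le_iff_le_exp (by linarith)).mpr hexp
  rw [ge_iff_le, one_div_mul_eq_div, div_le_iff₀ (by positivity)]
  linarith
end

section
/- Let L > 0, a_min ≥ 0, m > 0, η > 0, and b_1 > 0 with L·b_1 ≥ 1/e. Let ψ : ℝ → ℝ be differentiable at every u ≥ a_min with −ψ'(u) ≥ exp(−L u) for all u ≥ a_min, and let (a_t)_{t≥1} satisfy a_{t+1} = a_t − η m² ψ'(a_t) for all t ≥ 1, with a_1 > a_min. Then for every t ≥ 2 with (η m²/b_1)(t − 1) ≥ 1, the ratio r_t := a_t/b_1 satisfies r_t ≥ (1/(2 L b_1))·log((η m²/b_1)·(t − 1)). -/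
/-!
Along the iterates, `a_{t+1} ≥ a_t + c e^{-L a_t}` with `c = η m²`, and since `e^x ≥ 1 + x` this
gives `e^{L a_{t+1}} ≥ e^{L a_t} + L c`: the potential `e^{L a_t}` grows at least linearly in `t`.
Hence, with `X = (c / b₁)(t - 1)`, `e^{L a_t} ≥ 1 + L b₁ X ≥ 1 + X / e`, and `(1 + X/e)² ≥ 4X/e ≥ X`
gives `2 L a_t ≥ log X`.
-/

open Real

theorem exp_mul_add_le_exp_mul_of_add_mul_exp_neg_le {L c u v : ℝ} (hL : 0 ≤ L)
    (h : u + c * exp (-L * u) ≤ v) : exp (L * u) + L * c ≤ exp (L * v) :=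
  calc exp (L * u) + L * c = exp (L * u) * (1 + L * c * exp (-L * u)) := by
        rw [mul_add, mul_one, mul_left_comm, ← exp_add]; simp
    _ ≤ exp (L * u) * exp (L * c * exp (-L * u)) := by
        gcongr; linarith [add_one_le_exp (L * c * exp (-L * u))]
    _ = exp (L * (u + c * exp (-L * u))) := by rw [← exp_add]; ring_nf
    _ ≤ exp (L * v) := by gcongr

theorem log_le_two_mul_of_one_add_mul_le_exp {κ X y : ℝ} (hκ : 1 / exp 1 ≤ κ) (hX : 0 < X)
    (h : 1 + κ * X ≤ exp y) : log X ≤ 2 * y := by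
  have he : exp 1 ≤ 4 := by linarith [exp_one_lt_d9]
  have hXe : 1 + X / exp 1 ≤ exp y := by
    calc 1 + X / exp 1 = 1 + 1 / exp 1 * X := by ring
      _ ≤ 1 + κ * X := by gcongr
      _ ≤ exp y := h
  have hsq : X ≤ (1 + X / exp 1) ^ 2 :=
    calc X ≤ 4 * (X / exp 1) := by rw [mul_div_assoc', le_div_iff₀ (exp_pos 1)]; nlinarith
      _ ≤ (1 + X / exp 1) ^ 2 := by nlinarith [sq_nonneg (1 - X / exp 1)]
  rw [log_le_iff_le_exp hX, mul_comm, exp_mul, rpow_two]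
  exact hsq.trans (by gcongr)

section GradientDescent

variable {ψ : ℝ → ℝ} {L amin c : ℝ} {a : ℕ → ℝ}

theorem add_mul_exp_neg_le_gd_step (hc : 0 ≤ c)
    (hderiv : ∀ u : ℝ, amin ≤ u → -deriv ψ u ≥ exp (-L * u)) {u : ℝ} (hu : amin ≤ u) :
    u + c * exp (-L * u) ≤ u - c * deriv ψ u := by
  nlinarith [hderiv u hu]

variable (hc : 0 ≤ c) (hderiv : ∀ u : ℝ, amin ≤ u → -deriv ψ u ≥ exp (-L * u))
  (hrec : ∀ t ≥ 1, a (t + 1) = a t - c * deriv ψ (a t)) (hinit : a 1 > amin)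
include hc hderiv hrec hinit

theorem gd_iterate_ge_init : ∀ t ≥ 1, a 1 ≤ a t := by
  refine Nat.le_induction le_rfl fun t ht ih => ?_
  have hstep := add_mul_exp_neg_le_gd_step hc hderiv (hinit.le.trans ih)
  rw [hrec t ht]
  nlinarith [exp_pos (-L * a t)]

theorem exp_init_add_le_exp_gd_iterate (hL : 0 ≤ L) :
    ∀ t : ℕ, 1 ≤ t → exp (L * a 1) + L * c * ((t : ℝ) - 1) ≤ exp (L * a t) := by
  refine Nat.le_induction (by simp) fun t ht ih => ?_
  have hstep := add_mul_exp_neg_le_gd_step hc hderiv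
    (hinit.le.trans (gd_iterate_ge_init hc hderiv hrec hinit t ht))
  rw [← hrec t ht] at hstep
  have := exp_mul_add_le_exp_mul_of_add_mul_exp_neg_le hL hstep
  push_cast
  linarith

end GradientDescent

theorem stmt_18_general (L amin m η b1 : ℝ) (hL : 0 < L) (hamin : 0 ≤ amin)
    (hη : 0 < η) (hb1 : 0 < b1) (hLb1 : L * b1 ≥ 1 / Real.exp 1)
    (ψ : ℝ → ℝ)
    (hderiv : ∀ u : ℝ, amin ≤ u → -deriv ψ u ≥ Real.exp (-L * u))
    (a : ℕ → ℝ)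
    (hrec : ∀ t ≥ 1, a (t + 1) = a t - η * m ^ 2 * deriv ψ (a t))
    (hinit : a 1 > amin) :
    ∀ t : ℕ, 2 ≤ t → (η * m ^ 2 / b1) * ((t : ℝ) - 1) ≥ 1 →
      a t / b1 ≥ (1 / (2 * L * b1)) *
        Real.log ((η * m ^ 2 / b1) * ((t : ℝ) - 1)) := by
  intro t ht hX
  have hgrowth := exp_init_add_le_exp_gd_iterate (by positivity) hderiv hrec hinit hL.le t
    (by omega)
  have hone : 1 ≤ exp (L * a 1) := one_le_exp (by nlinarith)
  have hpot : 1 + L * b1 * ((η * m ^ 2 / b1) * ((t : ℝ) - 1)) ≤ exp (L * a t) := by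
    rw [mul_assoc L b1, ← mul_assoc b1, mul_div_cancel₀ _ hb1.ne']
    linarith
  have hlog := log_le_two_mul_of_one_add_mul_le_exp hLb1 (by linarith) hpot
  rw [ge_iff_le, one_div_mul_eq_div, div_le_div_iff₀ (by positivity) hb1]
  nlinarith

/-- Proposition 3, noiseless setting, τ* = 0: For L > 0,
a_min ≥ 0, m > 0, η > 0, b_1 > 0 with L·b_1 ≥ 1/e, and ψ differentiable at
every u ≥ a_min with −ψ'(u) ≥ exp(−L u) there, the sequence
a_{t+1} = a_t − η m² ψ'(a_t) with a_1 > a_min satisfies: for every t ≥ 2 with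
(η m²/b_1)(t − 1) ≥ 1, the ratio r_t = a_t/b_1 satisfies
r_t ≥ (1/(2 L b_1))·log((η m²/b_1)(t − 1)). -/
theorem stmt_18 (L amin m η b1 : ℝ) (hL : 0 < L) (hamin : 0 ≤ amin)
    (hm : 0 < m) (hη : 0 < η) (hb1 : 0 < b1) (hLb1 : L * b1 ≥ 1 / Real.exp 1)
    (ψ : ℝ → ℝ)
    (hdiff : ∀ u : ℝ, amin ≤ u → DifferentiableAt ℝ ψ u)
    (hderiv : ∀ u : ℝ, amin ≤ u → -deriv ψ u ≥ Real.exp (-L * u))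
    (a : ℕ → ℝ)
    (hrec : ∀ t ≥ 1, a (t + 1) = a t - η * m ^ 2 * deriv ψ (a t))
    (hinit : a 1 > amin) :
    ∀ t : ℕ, 2 ≤ t → (η * m ^ 2 / b1) * ((t : ℝ) - 1) ≥ 1 →
      a t / b1 ≥ (1 / (2 * L * b1)) *
        Real.log ((η * m ^ 2 / b1) * ((t : ℝ) - 1)) :=
  stmt_18_general L amin m η b1 hL hamin hη hb1 hLb1 ψ hderiv a hrec hinit
end
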